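/- Let U = I − 2|x⟩⟨x| be a reflection for a unit vector x ∈ ℂ^d with max_i |x_i|² ≤ 1/2. Then there exists a density matrix ρ of rank at most 2 such that diag(U†ρ) = 0. -/

import Mathlib

open Matrix
open scoped ComplexOrder

/-!
Take `ρ = (|x⟩⟨x| + |y⟩⟨y|) / 2` with `|y_i| = |x_i|` and `⟨x|y⟩ = 0`. Then `U†ρ = ρ - |x⟩⟨x|`,
whose diagonal is `(|y_i|² - |x_i|²) / 2 = 0`. Such a `y` is `y_i = θ_i x_i` for unimodular
`θ_i` with `∑ θ_i |x_i|² = 0`. To find the phases, split the weights `|x_i|²` into three blocks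
`a, b, c` (a maximal block of mass at most `1/2`, one further index, the rest); the hypothesis
`|x_i|² ≤ 1/2` makes them satisfy the triangle inequalities, so unimodular `u, v` with
`a + b u + c v = 0` exist by the intermediate value theorem.
-/

open Complex Finset

theorem exists_norm_one_norm_add_mul_eq {a b c : ℝ} (h₁ : |a - b| ≤ c) (h₂ : c ≤ a + b) :
    ∃ u : ℂ, ‖u‖ = 1 ∧ ‖(a : ℂ) + b * u‖ = c := by
  let f : ℝ → ℝ := fun θ => ‖(a : ℂ) + b * exp (θ * I)‖
  have hf : ContinuousOn f (Set.Icc 0 Real.pi) := by fun_prop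
  have hf₀ : f 0 = a + b := by
    simp only [f, ofReal_zero, zero_mul, Complex.exp_zero, mul_one]
    exact_mod_cast abs_of_nonneg (abs_nonneg _ |>.trans (h₁.trans h₂))
  have hfπ : f Real.pi = |a - b| := by
    simp only [f, exp_pi_mul_I, mul_neg_one, ← sub_eq_add_neg]
    exact_mod_cast Complex.norm_real (a - b)
  obtain ⟨θ, -, hθ⟩ := intermediate_value_Icc' Real.pi_pos.le hf
    (by rw [hf₀, hfπ]; exact ⟨h₁, h₂⟩)
  exact ⟨exp (θ * I), norm_exp_ofReal_mul_I θ, hθ⟩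

theorem exists_norm_one_add_mul_add_mul_eq_zero {a b c : ℝ} (h₁ : |a - b| ≤ c) (h₂ : c ≤ a + b) :
    ∃ u v : ℂ, ‖u‖ = 1 ∧ ‖v‖ = 1 ∧ (a : ℂ) + b * u + c * v = 0 := by
  obtain ⟨u, hu, hc⟩ := exists_norm_one_norm_add_mul_eq h₁ h₂
  rcases eq_or_ne c 0 with rfl | hc₀
  · exact ⟨u, 1, hu, by simp, by simpa using hc⟩
  refine ⟨u, -((a : ℂ) + b * u) / c, hu, ?_, ?_⟩
  · rw [norm_div, norm_neg, hc, norm_real, Real.norm_eq_abs, abs_of_nonneg (hc ▸ norm_nonneg _),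
      div_self hc₀]
  · field_simp
    ring

theorem exists_finset_sum_le_half_sum_le_add {ι : Type*} [Fintype ι] (w : ι → ℝ)
    (hpos : 0 < ∑ i, w i) :
    ∃ A : Finset ι, ∃ k ∉ A,
      2 * ∑ i ∈ A, w i ≤ ∑ i, w i ∧ ∑ i, w i ≤ 2 * (∑ i ∈ A, w i + w k) := by
  classical
  obtain ⟨A, hA, hmax⟩ :=
    (univ.powerset.filter fun A => 2 * ∑ i ∈ A, w i ≤ ∑ i, w i).exists_max_image
      (fun A => ∑ i ∈ A, w i) ⟨∅, by simp [hpos.le]⟩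
  have hA : 2 * ∑ i ∈ A, w i ≤ ∑ i, w i := (mem_filter.1 hA).2
  have hcompl : 0 < ∑ i ∈ Aᶜ, w i := by linarith [sum_add_sum_compl A w]
  obtain ⟨k, hk, hwk⟩ := exists_lt_of_sum_lt (f := fun _ => (0 : ℝ)) (by simpa using hcompl)
  -- a `k ∉ A` of positive weight cannot be added to `A`, by maximality
  refine ⟨A, k, mem_compl.1 hk, hA, not_lt.1 fun h => ?_⟩
  have hkA := sum_insert (f := w) (mem_compl.1 hk)
  have hle := hmax (insert k A)
    (mem_filter.2 ⟨mem_powerset.2 (subset_univ _), by rw [hkA]; linarith⟩)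
  linarith

theorem exists_norm_one_sum_mul_eq_zero {ι : Type*} [Fintype ι] (w : ι → ℝ) (hw : ∀ i, 0 ≤ w i)
    (hhalf : ∀ i, 2 * w i ≤ ∑ j, w j) :
    ∃ θ : ι → ℂ, (∀ i, ‖θ i‖ = 1) ∧ ∑ i, θ i * w i = 0 := by
  classical
  rcases (sum_nonneg fun i _ => hw i).eq_or_lt with hS | hS
  · refine ⟨1, by simp, sum_eq_zero fun i _ => ?_⟩
    simp [(sum_eq_zero_iff_of_nonneg fun i _ => hw i).1 hS.symm i (mem_univ i)]
  obtain ⟨A, k, hk, hA, hAk⟩ := exists_finset_sum_le_half_sum_le_add w hS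
  obtain ⟨u, v, hu, hv, huv⟩ := exists_norm_one_add_mul_add_mul_eq_zero
    (a := ∑ i ∈ A, w i) (b := w k) (c := ∑ i, w i - ∑ i ∈ A, w i - w k)
    (abs_sub_le_iff.2 ⟨by linarith, by linarith [hhalf k]⟩) (by linarith)
  refine ⟨fun i => if i ∈ A then 1 else if i = k then u else v, fun i => ?_, ?_⟩
  · dsimp only
    split_ifs <;> simp [hu, hv]
  have hterm : ∀ i, (if i ∈ A then 1 else if i = k then u else v) * (w i : ℂ) =
      v * w i + (1 - v) * (if i ∈ A then (w i : ℂ) else 0) +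
        (u - v) * (if i = k then (w i : ℂ) else 0) := by
    intro i
    split_ifs with h₁ h₂ <;> first | (subst h₂; contradiction) | ring
  simp only [hterm, sum_add_distrib, ← mul_sum, sum_ite_mem, univ_inter, sum_ite_eq', mem_univ,
    if_true]
  push_cast at huv
  linear_combination huv

theorem exists_norm_eq_star_dotProduct_eq_zero {ι : Type*} [Fintype ι] (x : ι → ℂ)
    (hhalf : ∀ i, 2 * ‖x i‖ ^ 2 ≤ ∑ j, ‖x j‖ ^ 2) :
    ∃ y : ι → ℂ, (∀ i, ‖y i‖ = ‖x i‖) ∧ star x ⬝ᵥ y = 0 := by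
  obtain ⟨θ, hθ, hsum⟩ :=
    exists_norm_one_sum_mul_eq_zero (fun i => ‖x i‖ ^ 2) (fun i => by positivity) hhalf
  refine ⟨fun i => θ i * x i, fun i => by simp [hθ], ?_⟩
  rw [← hsum]
  refine sum_congr rfl fun i _ => ?_
  simp only [Pi.star_apply, star_def, ofReal_pow]
  rw [← conj_mul']
  ring

theorem star_dotProduct_self_eq_sum_norm_sq {ι : Type*} [Fintype ι] (x : ι → ℂ) :
    star x ⬝ᵥ x = ((∑ i, ‖x i‖ ^ 2 : ℝ) : ℂ) := by
  push_cast
  exact sum_congr rfl fun i _ => conj_mul' (x i)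

theorem Matrix.rank_add_le {m n K : Type*} [Fintype n] [Field K] (A B : Matrix m n K) :
    (A + B).rank ≤ A.rank + B.rank := by
  rw [Matrix.rank, Matrix.rank, Matrix.rank, Matrix.mulVecLin_add]
  exact (Submodule.finrank_mono (LinearMap.range_add_le _ _)).trans
    (Submodule.finrank_add_le_finrank_add_finrank _ _)

theorem conjTranspose_reflection_mul_add {n R : Type*} [Fintype n] [DecidableEq n] [CommRing R]
    [StarRing R] {x y : n → R} (hxx : star x ⬝ᵥ x = 1) (hxy : star x ⬝ᵥ y = 0) :
    (1 - (2 : R) • vecMulVec x (star x))ᴴ * (vecMulVec x (star x) + vecMulVec y (star y)) =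
      vecMulVec y (star y) - vecMulVec x (star x) := by
  rw [conjTranspose_sub, conjTranspose_one, conjTranspose_smul, conjTranspose_vecMulVec, star_star,
    star_ofNat, sub_mul, one_mul, smul_mul_assoc, mul_add, vecMulVec_mul_vecMulVec,
    vecMulVec_mul_vecMulVec, hxx, hxy, one_smul, zero_smul, vecMulVec_zero]
  module

theorem stmt12 (d : ℕ) (x : Fin d → ℂ)
    (hx : ∑ i, ‖x i‖ ^ 2 = 1)
    (hmax : ∀ i, ‖x i‖ ^ 2 ≤ 1 / 2)
    (U : Matrix (Fin d) (Fin d) ℂ)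
    (hUdef : U = 1 - (2 : ℂ) • Matrix.vecMulVec x (star x)) :
    ∃ ρ : Matrix (Fin d) (Fin d) ℂ, ρ.PosSemidef ∧ ρ.trace = 1 ∧ ρ.rank ≤ 2 ∧
      ∀ i, (Uᴴ * ρ) i i = 0 := by
  obtain ⟨y, hy, hxy⟩ := exists_norm_eq_star_dotProduct_eq_zero x fun i => by linarith [hmax i]
  have hxx : star x ⬝ᵥ x = 1 := by rw [star_dotProduct_self_eq_sum_norm_sq, hx, ofReal_one]
  have hyy : star y ⬝ᵥ y = 1 := by
    simp_rw [star_dotProduct_self_eq_sum_norm_sq, hy, hx, ofReal_one]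
  refine ⟨(1 / 2 : ℂ) • (vecMulVec x (star x) + vecMulVec y (star y)), ?_, ?_, ?_, fun i => ?_⟩
  · exact ((posSemidef_vecMulVec_self_star x).add (posSemidef_vecMulVec_self_star y)).smul
      (by positivity)
  · rw [trace_smul, trace_add, trace_vecMulVec, trace_vecMulVec, dotProduct_comm, hxx,
      dotProduct_comm, hyy]
    norm_num
  · rw [rank_smul_of_mem_nonZeroDivisors _ (mem_nonZeroDivisors_of_ne_zero (by norm_num))]
    exact (rank_add_le _ _).trans (add_le_add (rank_vecMulVec_le _ _) (rank_vecMulVec_le _ _))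
  · rw [hUdef, mul_smul_comm, conjTranspose_reflection_mul_add hxx hxy]
    simp [vecMulVec_apply, mul_conj', hy]
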